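/- arXiv:1210.2972 — 2 statements merged into one kernel-verified Lean document; each statement's English description precedes it below -/
import Mathlib

section
/- Given Petri nets N₁ and N₂, augmenting each net with three new places p₁, p₂, p₃ (p₁ initially holding one token, p₂, p₃ empty) and three transitions tᵢ moving one token from pᵢ to p_{(i mod 3)+1} yields nets whose reachability sets are equal if and only if Reach(N₁) = Reach(N₂); moreover, in the augmented nets, every reachable marking lies on a cycle of length three. -/
structure PetriNet (P T : Type) where
  pre : P → T → ℕ
  post : T → P → ℕ
  M0 : P → ℕ

namespace PetriNet

variable {P T : Type}

/-- Transition `t` is enabled at marking `M`. -/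
def enabled (N : PetriNet P T) (t : T) (M : P → ℕ) : Prop :=
  ∀ p, N.pre p t ≤ M p

/-- `M [t⟩ M'`: firing transition `t` at `M` yields `M'`. -/
def fires (N : PetriNet P T) (t : T) (M M' : P → ℕ) : Prop :=
  N.enabled t M ∧ ∀ p, M' p = M p + N.post t p - N.pre p t

/-- One-step relation `M → M'`. -/
def step (N : PetriNet P T) (M M' : P → ℕ) : Prop := ∃ t, N.fires t M M'

/-- Reachability `M →* M'`: reflexive-transitive closure of `step`. -/
def reach (N : PetriNet P T) : (P → ℕ) → (P → ℕ) → Prop :=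
  Relation.ReflTransGen N.step

/-- The reachability set of `N`. -/
def Reach (N : PetriNet P T) : Set (P → ℕ) := {M | N.reach N.M0 M}

end PetriNet

/-- Augment a net with three new places p₁, p₂, p₃ (p₁ initially marked) and
transitions tᵢ moving one token from pᵢ to p_{(i mod 3)+1}. -/
def augment {P T : Type} (N : PetriNet P T) : PetriNet (P ⊕ Fin 3) (T ⊕ Fin 3) where
  pre := fun q t =>
    match q, t with
    | Sum.inl p, Sum.inl t => N.pre p t
    | Sum.inl _, Sum.inr _ => 0
    | Sum.inr _, Sum.inl _ => 0
    | Sum.inr i, Sum.inr j => if i = j then 1 else 0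
  post := fun t q =>
    match t, q with
    | Sum.inl t, Sum.inl p => N.post t p
    | Sum.inr _, Sum.inl _ => 0
    | Sum.inl _, Sum.inr _ => 0
    | Sum.inr j, Sum.inr i => if i = j + 1 then 1 else 0
  M0 := fun q =>
    match q with
    | Sum.inl p => N.M0 p
    | Sum.inr i => if i = 0 then 1 else 0

/-! Write `extendMarking M i` for the marking that agrees with `M` on the old places and has a
single token on the `i`-th new place. The reachable markings of `augment N` are exactly the
`extendMarking M i` with `M` reachable in `N`: transitions of `N` act on `M`, the new
transitions rotate the token, and the two never interact. Since `extendMarking M i` determines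
`M`, the reachability sets of the augmented nets determine those of the original nets, and
rotating the token three times returns to the starting marking. -/

def extendMarking {P : Type} (M : P → ℕ) (i : Fin 3) : P ⊕ Fin 3 → ℕ :=
  Sum.elim M (Pi.single i 1)

section Augment

variable {P T : Type} (N : PetriNet P T)

@[simp]
lemma extendMarking_inl (M : P → ℕ) (i : Fin 3) (p : P) : extendMarking M i (.inl p) = M p := rfl

@[simp]
lemma extendMarking_inr (M : P → ℕ) (i k : Fin 3) :
    extendMarking M i (.inr k) = if k = i then 1 else 0 :=
  Pi.single_apply i 1 k

lemma eq_of_extendMarking_eq {M M' : P → ℕ} {i j : Fin 3}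
    (h : extendMarking M i = extendMarking M' j) : M = M' :=
  funext fun p => congrFun h (.inl p)

lemma augment_M0 : (augment N).M0 = extendMarking N.M0 0 := by
  funext q; cases q <;> simp [augment]

lemma augment_step_rotate (M : P → ℕ) (i : Fin 3) :
    (augment N).step (extendMarking M i) (extendMarking M (i + 1)) := by
  refine ⟨.inr i, fun q => ?_, fun q => ?_⟩ <;> cases q <;> simp [augment]

lemma augment_step_lift {M M' : P → ℕ} (i : Fin 3) (h : N.step M M') :
    (augment N).step (extendMarking M i) (extendMarking M' i) := by
  obtain ⟨t, hen, hM'⟩ := h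
  refine ⟨.inl t, fun q => ?_, fun q => ?_⟩ <;> cases q <;> simp [augment, hen _, hM']

lemma augment_step_extendMarking {M : P → ℕ} {i : Fin 3} {M'' : P ⊕ Fin 3 → ℕ}
    (h : (augment N).step (extendMarking M i) M'') :
    (∃ M', N.step M M' ∧ M'' = extendMarking M' i) ∨ M'' = extendMarking M (i + 1) := by
  obtain ⟨t | j, hen, hM''⟩ := h
  · refine .inl ⟨fun p => M p + N.post t p - N.pre p t, ⟨t, fun p => hen (.inl p), fun _ => rfl⟩,
      funext fun q => ?_⟩
    cases q <;> simp [hM'', augment]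
  · obtain rfl : j = i := by
      by_contra hji
      simpa [augment, hji] using hen (.inr j)
    refine .inr (funext fun q => ?_)
    cases q <;> simp [hM'', augment]

lemma augment_reach_lift {M M' : P → ℕ} (i : Fin 3) (h : N.reach M M') :
    (augment N).reach (extendMarking M i) (extendMarking M' i) :=
  h.lift (extendMarking · i) fun _ _ => augment_step_lift N i

open Fin.NatCast in
lemma augment_reach_rotate (M : P → ℕ) (i j : Fin 3) :
    (augment N).reach (extendMarking M i) (extendMarking M j) := by
  have shift : ∀ k : ℕ, (augment N).reach (extendMarking M i) (extendMarking M (i + k)) := by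
    intro k
    induction k with
    | zero => rw [Nat.cast_zero, add_zero]; exact .refl
    | succ k ih => rw [Nat.cast_succ, ← add_assoc]; exact ih.tail (augment_step_rotate N M (i + k))
  simpa using shift (j - i).val

theorem reach_augment : (augment N).Reach = Set.image2 extendMarking N.Reach Set.univ := by
  apply Set.Subset.antisymm
  · intro M hM
    induction hM with
    | refl => exact ⟨N.M0, .refl, 0, trivial, (augment_M0 N).symm⟩
    | tail _ hstep ih =>
      obtain ⟨M, hM, i, -, rfl⟩ := ih
      rcases augment_step_extendMarking N hstep with ⟨M', hM', rfl⟩ | rfl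
      · exact ⟨M', hM.tail hM', i, trivial, rfl⟩
      · exact ⟨M, hM, i + 1, trivial, rfl⟩
  · rintro _ ⟨M, hM, i, -, rfl⟩
    show (augment N).reach _ _
    rw [augment_M0]
    exact (augment_reach_lift N 0 hM).trans (augment_reach_rotate N M 0 i)

lemma extendMarking_mem_reach_augment (M : P → ℕ) (i : Fin 3) :
    extendMarking M i ∈ (augment N).Reach ↔ M ∈ N.Reach := by
  rw [reach_augment]
  constructor
  · rintro ⟨M', hM', j, -, h⟩
    exact eq_of_extendMarking_eq h ▸ hM'
  · exact fun hM => ⟨M, hM, i, trivial, rfl⟩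

lemma exists_three_cycle_of_mem_reach_augment :
    ∀ M ∈ (augment N).Reach, ∃ M₂ M₃,
      (augment N).step M M₂ ∧ (augment N).step M₂ M₃ ∧ (augment N).step M₃ M := by
  rw [reach_augment]
  rintro _ ⟨M, -, i, -, rfl⟩
  refine ⟨_, _, augment_step_rotate N M i, augment_step_rotate N M (i + 1), ?_⟩
  simpa [add_assoc] using augment_step_rotate N M (i + 1 + 1)

end Augment

/-- The augmented nets have equal reachability sets iff the original nets do;
moreover every reachable marking of an augmented net lies on a cycle of
length three. -/
theorem augment_reach_eq_iff_and_three_cycles {P T₁ T₂ : Type}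
    (N₁ : PetriNet P T₁) (N₂ : PetriNet P T₂) :
    ((augment N₁).Reach = (augment N₂).Reach ↔ N₁.Reach = N₂.Reach) ∧
      (∀ M ∈ (augment N₁).Reach, ∃ M₂ M₃,
        (augment N₁).step M M₂ ∧ (augment N₁).step M₂ M₃ ∧ (augment N₁).step M₃ M) ∧
      (∀ M ∈ (augment N₂).Reach, ∃ M₂ M₃,
        (augment N₂).step M M₂ ∧ (augment N₂).step M₂ M₃ ∧ (augment N₂).step M₃ M) := by
  refine ⟨⟨fun h => ?_, fun h => ?_⟩, exists_three_cycle_of_mem_reach_augment N₁,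
    exists_three_cycle_of_mem_reach_augment N₂⟩
  · ext M
    rw [← extendMarking_mem_reach_augment N₁ M 0, h, extendMarking_mem_reach_augment]
  · rw [reach_augment, reach_augment, h]
end

section
/- If X ⊆ ℕⁿ is a semilinear set, then pre(X) := {M ∈ ℕⁿ : ∃M' ∈ X, M → M'} (the set of markings having a one-step successor in X under the firing relation of a Petri net with n places) is semilinear. -/
/-- A linear subset: base vector plus ℕ-linear combinations of finitely many periods. -/
def LinearSet {M : Type*} [AddCommMonoid M] (E : Set M) : Prop :=
  ∃ (x : M) (m : ℕ) (y : Fin m → M),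
    E = {v | ∃ k : Fin m → ℕ, v = x + ∑ i, k i • y i}

/-- A semilinear subset: finite union of linear sets. -/
def SemilinearSet {M : Type*} [AddCommMonoid M] (E : Set M) : Prop :=
  ∃ (m : ℕ) (L : Fin m → Set M), (∀ i, LinearSet (L i)) ∧ E = ⋃ i, L i

/-- pre(X): the set of markings having a one-step successor in X. -/
def preSet {P T : Type} (N : PetriNet P T) (X : Set (P → ℕ)) : Set (P → ℕ) :=
  {M | ∃ M' ∈ X, N.step M M'}

/-! The firing rule reads `M = pre t + v`, `M' = v + post t` for some `v`. Hence `pre(X)` is the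
finite union over `t` of the translates by `pre t` of `{v | v + post t ∈ X}`, and translation
preserves semilinearity. For `{v | v + b ∈ x + ⟨y₁, …, yₘ⟩}`, cap the coefficients of a
representation `v + b = x + ∑ kᵢ yᵢ` at `B = ∑ b`: the capped vector `x + ∑ min(kᵢ, B) yᵢ` still
dominates `b`, so the set is the finite union of the linear sets `(x + ∑ cᵢ yᵢ - b) + ⟨y₁, …, yₘ⟩`
over the capped coefficient vectors `c` with `b ≤ x + ∑ cᵢ yᵢ`. -/

section Semilinear

variable {M : Type*} [AddCommMonoid M]

theorem LinearSet.semilinearSet {E : Set M} (h : LinearSet E) : SemilinearSet E :=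
  ⟨1, fun _ => E, fun _ => h, (Set.iUnion_const E).symm⟩

theorem SemilinearSet.iUnion {ι : Type*} [Finite ι] {S : ι → Set M}
    (h : ∀ i, SemilinearSet (S i)) : SemilinearSet (⋃ i, S i) := by
  choose m L hL hS using h
  have := Fintype.ofFinite ι
  let e : Fin (Fintype.card (Σ i, Fin (m i))) ≃ Σ i, Fin (m i) := (Fintype.equivFin _).symm
  refine ⟨_, fun j => L (e j).1 (e j).2, fun j => hL _ _, ?_⟩
  rw [e.surjective.iUnion_comp (fun s => L s.1 s.2), Set.iUnion_sigma]
  exact Set.iUnion_congr hS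

theorem LinearSet.image_add_left (a : M) {E : Set M} (h : LinearSet E) :
    LinearSet ((a + ·) '' E) := by
  obtain ⟨x, m, y, rfl⟩ := h
  refine ⟨a + x, m, y, Set.ext fun v => ⟨?_, ?_⟩⟩
  · rintro ⟨_, ⟨k, rfl⟩, rfl⟩
    exact ⟨k, (add_assoc _ _ _).symm⟩
  · rintro ⟨k, rfl⟩
    exact ⟨_, ⟨k, rfl⟩, (add_assoc _ _ _).symm⟩

theorem SemilinearSet.image_add_left (a : M) {E : Set M} (h : SemilinearSet E) :
    SemilinearSet ((a + ·) '' E) := by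
  obtain ⟨m, L, hL, rfl⟩ := h
  rw [Set.image_iUnion]
  exact .iUnion fun i => (LinearSet.image_add_left a (hL i)).semilinearSet

end Semilinear

theorem le_add_sum_min_mul {ι : Type*} (s : Finset ι) {a B : ℕ} (x : ℕ) (k z : ι → ℕ)
    (haB : a ≤ B) (ha : a ≤ x + ∑ i ∈ s, k i * z i) :
    a ≤ x + ∑ i ∈ s, min (k i) B * z i := by
  by_cases h : ∃ i ∈ s, B < k i ∧ 0 < z i
  · obtain ⟨i, hi, hBk, hz⟩ := h
    calc a ≤ B := haB
      _ ≤ min (k i) B * z i := by rw [min_eq_right hBk.le]; exact Nat.le_mul_of_pos_right B hz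
      _ ≤ ∑ j ∈ s, min (k j) B * z j := Finset.single_le_sum (f := fun j => min (k j) B * z j) (fun _ _ => Nat.zero_le _) hi
      _ ≤ x + _ := Nat.le_add_left _ _
  · push Not at h
    have hsum : ∑ i ∈ s, min (k i) B * z i = ∑ i ∈ s, k i * z i :=
      Finset.sum_congr rfl fun i hi => by
        rcases le_or_gt (k i) B with hk | hk
        · rw [min_eq_left hk]
        · rw [Nat.eq_zero_of_not_pos (h i hi hk).not_gt, mul_zero, mul_zero]
    rwa [hsum]

theorem LinearSet.semilinearSet_preimage_add_right {ι : Type*} [Fintype ι] (b : ι → ℕ)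
    {E : Set (ι → ℕ)} (hE : LinearSet E) : SemilinearSet ((· + b) ⁻¹' E) := by
  classical
  obtain ⟨x, m, y, rfl⟩ := hE
  set B := ∑ p, b p
  let σ : (Fin m → Fin (B + 1)) → ι → ℕ := fun c => x + ∑ i, (c i : ℕ) • y i
  suffices (· + b) ⁻¹' {v | ∃ k : Fin m → ℕ, v = x + ∑ i, k i • y i} =
      ⋃ c : {c // b ≤ σ c}, {v | ∃ k : Fin m → ℕ, v = (σ c - b) + ∑ i, k i • y i} by
    rw [this]
    exact .iUnion fun c => LinearSet.semilinearSet ⟨_, m, y, rfl⟩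
  ext v
  simp only [Set.mem_preimage, Set.mem_ofPred_eq, Set.mem_iUnion]
  constructor
  · rintro ⟨k, hk⟩
    let c : Fin m → Fin (B + 1) := fun i => ⟨min (k i) B, Nat.lt_succ_of_le (min_le_right _ _)⟩
    have hsplit : x + ∑ i, k i • y i = σ c + ∑ i, (k i - min (k i) B) • y i := by
      simp only [σ, c, add_assoc, ← Finset.sum_add_distrib, ← add_smul]
      congr! 3 with i
      omega
    have hb : b ≤ σ c := fun p => by
      have hbp : b p ≤ x p + ∑ i, k i * y i p := by
        have hkp := congrFun hk p
        simp only [Pi.add_apply, Finset.sum_apply, Pi.smul_apply, smul_eq_mul] at hkp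
        omega
      simpa [σ, c, Finset.sum_apply] using le_add_sum_min_mul Finset.univ (x p) k (y · p)
        (Finset.single_le_sum (fun _ _ => Nat.zero_le _) (Finset.mem_univ p)) hbp
    refine ⟨⟨c, hb⟩, fun i => k i - min (k i) B, add_right_cancel (b := b) ?_⟩
    calc v + b = σ c + ∑ i, (k i - min (k i) B) • y i := hk.trans hsplit
      _ = σ c - b + b + ∑ i, (k i - min (k i) B) • y i := by rw [tsub_add_cancel_of_le hb]
      _ = _ := add_right_comm _ _ _
  · rintro ⟨⟨c, hb⟩, k, rfl⟩
    refine ⟨fun i => c i + k i, ?_⟩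
    simp only [add_smul, Finset.sum_add_distrib, ← add_assoc]
    rw [add_right_comm, tsub_add_cancel_of_le hb]

theorem SemilinearSet.preimage_add_right {ι : Type*} [Fintype ι] (b : ι → ℕ)
    {E : Set (ι → ℕ)} (hE : SemilinearSet E) : SemilinearSet ((· + b) ⁻¹' E) := by
  obtain ⟨m, L, hL, rfl⟩ := hE
  rw [Set.preimage_iUnion]
  exact .iUnion fun i => (hL i).semilinearSet_preimage_add_right b

namespace PetriNet

variable {P T : Type}

theorem fires_iff (N : PetriNet P T) (t : T) (M M' : P → ℕ) :
    N.fires t M M' ↔ ∃ v, M = (N.pre · t) + v ∧ M' = v + N.post t := by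
  constructor
  · rintro ⟨hen, hM'⟩
    refine ⟨M - (N.pre · t), funext fun p => ?_, funext fun p => ?_⟩
    · have := hen p
      simp only [Pi.add_apply, Pi.sub_apply]
      omega
    · have := hen p
      simp only [hM', Pi.add_apply, Pi.sub_apply]
      omega
  · rintro ⟨v, rfl, rfl⟩
    exact ⟨fun p => Nat.le_add_right _ _, fun p => by simp only [Pi.add_apply]; omega⟩

theorem preSet_eq_iUnion (N : PetriNet P T) (X : Set (P → ℕ)) :
    preSet N X = ⋃ t, ((N.pre · t) + ·) '' ((· + N.post t) ⁻¹' X) := by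
  ext M
  simp only [preSet, step, fires_iff, Set.mem_ofPred_eq, Set.mem_iUnion, Set.mem_image,
    Set.mem_preimage]
  constructor
  · rintro ⟨_, hM', t, v, rfl, rfl⟩
    exact ⟨t, v, hM', rfl⟩
  · rintro ⟨t, v, hv, rfl⟩
    exact ⟨_, hv, t, v, rfl, rfl⟩

end PetriNet

/-- For a Petri net with n places and finitely many transitions, if X ⊆ ℕⁿ is
semilinear then so is pre(X). -/
theorem preSet_semilinear (n : ℕ) {T : Type} [Fintype T]
    (N : PetriNet (Fin n) T) (X : Set (Fin n → ℕ)) (hX : SemilinearSet X) :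
    SemilinearSet (preSet N X) := by
  rw [N.preSet_eq_iUnion X]
  exact .iUnion fun t => (hX.preimage_add_right (N.post t)).image_add_left _
end
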